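/- Let G be a connected simple graph with maximum degree 3 and φ a δ-minimum edge-colouring of G. Let e₁ = uv₁ be an edge coloured δ such that v₁ has degree 2 in G. Then v₁ is the only vertex of degree 2 in the neighbourhood N(u) of u, and for any other edge e₂ = u₂v₂ coloured δ, the set {e₁, e₂} induces a subgraph isomorphic to 2K₂ (i.e., no end of e₁ is adjacent to or equal to an end of e₂). -/

import Mathlib

open SimpleGraph

namespace Parsimonious

/-- `φ` is a proper edge colouring of the set `F` of edges: two distinct edges of `F`
sharing a vertex receive different colours. -/
def ProperOn {V α : Type*} (F : Set (Sym2 V)) (φ : Sym2 V → α) : Prop :=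
  ∀ ⦃e₁⦄, e₁ ∈ F → ∀ ⦃e₂⦄, e₂ ∈ F → e₁ ≠ e₂ → (∃ v, v ∈ e₁ ∧ v ∈ e₂) → φ e₁ ≠ φ e₂

/-- `G` admits a proper edge colouring with `k` colours. -/
def EdgeColorable {V : Type*} (G : SimpleGraph V) (k : ℕ) : Prop :=
  ∃ φ : Sym2 V → Fin k, ProperOn G.edgeSet φ

/-- `γ(G)`: the largest fraction of the edges of `G` spanning a properly
3-edge-colourable subgraph. -/
noncomputable def gamma {V : Type*} (G : SimpleGraph V) : ℝ :=
  sSup {r : ℝ | ∃ F : Set (Sym2 V), F ⊆ G.edgeSet ∧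
    (∃ φ : Sym2 V → Fin 3, ProperOn F φ) ∧
    r = (F.ncard : ℝ) / (G.edgeSet.ncard : ℝ)}

/-- `s(G)`: the minimum number of edges coloured `δ` (colour `3`) over all proper
edge colourings of `G` with the four colours `α, β, γ, δ` (= `0, 1, 2, 3`). -/
noncomputable def sColor {V : Type*} (G : SimpleGraph V) : ℕ :=
  sInf {k : ℕ | ∃ φ : Sym2 V → Fin 4, ProperOn G.edgeSet φ ∧
    k = {e ∈ G.edgeSet | φ e = 3}.ncard}

/-- `φ` is a δ-minimum edge colouring of `G`. -/
def IsDeltaMin {V : Type*} (G : SimpleGraph V) (φ : Sym2 V → Fin 4) : Prop :=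
  ProperOn G.edgeSet φ ∧ {e ∈ G.edgeSet | φ e = 3}.ncard = sColor G

/-- The odd girth of `G`: the length of a shortest odd cycle. -/
noncomputable def oddGirth {V : Type*} (G : SimpleGraph V) : ℕ :=
  sInf {n : ℕ | Odd n ∧ ∃ (v : V) (c : G.Walk v v), c.IsCycle ∧ c.length = n}

/-- The Petersen graph, i.e. the Kneser graph `K(5,2)`. -/
def petersen : SimpleGraph {s : Finset (Fin 5) // s.card = 2} where
  Adj a b := Disjoint a.1 b.1
  symm := ⟨fun _ _ h => h.symm⟩
  loopless := ⟨fun a h => by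
    have h2 : a.1 = ∅ := disjoint_self.mp h
    have hc := a.2
    rw [show a.1 = ∅ from h2] at hc
    simp at hc⟩

/-- `φ(x,y)`: the subgraph of `G` spanned by the edges coloured `x` or `y`. -/
def twoColour {V : Type*} (G : SimpleGraph V) (φ : Sym2 V → Fin 4) (x y : Fin 4) :
    SimpleGraph V :=
  SimpleGraph.fromEdgeSet {e | e ∈ G.edgeSet ∧ (φ e = x ∨ φ e = y)}

/-- An edge is in `A_φ` when it is coloured `δ` and its ends are joined by a path
of `φ(α,β)`. -/
def InA {V : Type*} (G : SimpleGraph V) (φ : Sym2 V → Fin 4) (e : Sym2 V) : Prop :=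
  e ∈ G.edgeSet ∧ φ e = 3 ∧ ∀ u v : V, e = s(u, v) → (twoColour G φ 0 1).Reachable u v

/-- An edge is in `B_φ` when it is coloured `δ` and its ends are joined by a path
of `φ(β,γ)`. -/
def InB {V : Type*} (G : SimpleGraph V) (φ : Sym2 V → Fin 4) (e : Sym2 V) : Prop :=
  e ∈ G.edgeSet ∧ φ e = 3 ∧ ∀ u v : V, e = s(u, v) → (twoColour G φ 1 2).Reachable u v

/-- An edge is in `C_φ` when it is coloured `δ` and its ends are joined by a path
of `φ(α,γ)`. -/
def InC {V : Type*} (G : SimpleGraph V) (φ : Sym2 V → Fin 4) (e : Sym2 V) : Prop :=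
  e ∈ G.edgeSet ∧ φ e = 3 ∧ ∀ u v : V, e = s(u, v) → (twoColour G φ 0 2).Reachable u v

/-- The edge set of the odd cycle `C_{A_φ}(e)` associated to an edge `e ∈ A_φ`:
the component of `φ(α,β)` containing the ends of `e`, together with `e`. -/
def assocCycleA {V : Type*} (G : SimpleGraph V) (φ : Sym2 V → Fin 4) (e : Sym2 V) :
    Set (Sym2 V) :=
  insert e {f | f ∈ G.edgeSet ∧ (φ f = 0 ∨ φ f = 1) ∧
    ∃ x, x ∈ f ∧ ∃ y, y ∈ e ∧ (twoColour G φ 0 1).Reachable y x}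

/-- The edge set of the odd cycle `C_{B_φ}(e)` associated to an edge `e ∈ B_φ`. -/
def assocCycleB {V : Type*} (G : SimpleGraph V) (φ : Sym2 V → Fin 4) (e : Sym2 V) :
    Set (Sym2 V) :=
  insert e {f | f ∈ G.edgeSet ∧ (φ f = 1 ∨ φ f = 2) ∧
    ∃ x, x ∈ f ∧ ∃ y, y ∈ e ∧ (twoColour G φ 1 2).Reachable y x}

/-- The edge set of the odd cycle `C_{C_φ}(e)` associated to an edge `e ∈ C_φ`. -/
def assocCycleC {V : Type*} (G : SimpleGraph V) (φ : Sym2 V → Fin 4) (e : Sym2 V) :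
    Set (Sym2 V) :=
  insert e {f | f ∈ G.edgeSet ∧ (φ f = 0 ∨ φ f = 2) ∧
    ∃ x, x ∈ f ∧ ∃ y, y ∈ e ∧ (twoColour G φ 0 2).Reachable y x}

/-- The three sets `A_φ`, `B_φ`, `C_φ`. -/
def colourClass {V : Type*} (G : SimpleGraph V) (φ : Sym2 V → Fin 4) :
    Fin 3 → Set (Sym2 V)
  | 0 => {e | InA G φ e}
  | 1 => {e | InB G φ e}
  | 2 => {e | InC G φ e}

/-- `C` is one of the odd cycles associated to the δ-coloured edge `e`. -/
def IsAssocCycle {V : Type*} (G : SimpleGraph V) (φ : Sym2 V → Fin 4) (e : Sym2 V)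
    (C : Set (Sym2 V)) : Prop :=
  (InA G φ e ∧ C = assocCycleA G φ e) ∨
  (InB G φ e ∧ C = assocCycleB G φ e) ∨
  (InC G φ e ∧ C = assocCycleC G φ e)

end Parsimonious

/-!
Let `z₁` be the second neighbour of `v₁` and `c = φ(v₁ z₁)`. By minimality every colour other
than `δ` and `c` is present at `u`, so `c` is missing at `u`; and for each colour `m ∉ {δ, c}`
the Kempe chain of `φ(m, c)` starting at `v₁` ends at `u`, since otherwise swapping it frees `c`
at both ends of `u v₁`, which could then be recoloured. A component of a two-coloured subgraph
has at most two ends, and comparing the ends of these chains shows that `z₁` and every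
neighbour `w ≠ v₁` of `u` see all of `α, β, γ`. Such a vertex has degree three and no δ-edge,
which gives both claims.
-/

namespace SimpleGraph

variable {V : Type*} {H : SimpleGraph V}

theorem Reachable.mem_of_adj_closed {S : Set V} (hS : ∀ s ∈ S, ∀ t, H.Adj s t → t ∈ S)
    {p q : V} (hpq : H.Reachable p q) (hp : p ∈ S) : q ∈ S := by
  have h := (reachable_iff_reflTransGen p q).1 hpq
  clear hpq
  induction h with
  | refl => exact hp
  | tail _ hst ih => exact hS _ ih _ hst

/-- `hH` bounds all degrees by two, so the component of `p` is a path with ends `p` and `q`. -/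
theorem eq_or_eq_of_reachable_of_subsingleton_neighborSet
    (hH : ∀ v a b t, H.Adj v a → H.Adj v b → a ≠ b → H.Adj v t → t = a ∨ t = b)
    {p q r : V} (hp : (H.neighborSet p).Subsingleton) (hq : (H.neighborSet q).Subsingleton)
    (hr : (H.neighborSet r).Subsingleton) (hpq : H.Reachable p q) (hne : p ≠ q)
    (hpr : H.Reachable p r) : r = p ∨ r = q := by
  classical
  obtain ⟨W, hW⟩ := hpq.some.toPath
  set n := W.length
  have hn : 0 < n := Nat.pos_of_ne_zero fun h => hne (W.eq_of_length_eq_zero h)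
  have hsucc : ∀ i < n, H.Adj (W.getVert i) (W.getVert (i + 1)) := fun i hi => W.adj_getVert_succ hi
  have hinner : ∀ i, 0 < i → i < n → H.Adj (W.getVert i) (W.getVert (i - 1)) ∧
      H.Adj (W.getVert i) (W.getVert (i + 1)) ∧ W.getVert (i - 1) ≠ W.getVert (i + 1) := by
    intro i hi0 hin
    refine ⟨?_, hsucc i hin, fun h => ?_⟩
    · simpa [Nat.sub_add_cancel hi0] using (hsucc (i - 1) (by omega)).symm
    · have := hW.getVert_injOn (by simp; omega) (by simp; omega) h
      omega
  have hclosed : ∀ s ∈ {v | ∃ i ≤ n, W.getVert i = v}, ∀ t, H.Adj s t →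
      t ∈ {v | ∃ i ≤ n, W.getVert i = v} := by
    rintro _ ⟨i, hi, rfl⟩ t ht
    rcases Nat.eq_zero_or_pos i with rfl | hi0
    · refine ⟨1, hn, hp (by simpa using hsucc 0 hn) ?_⟩
      simpa using ht
    rcases hi.lt_or_eq with hin | rfl
    · obtain ⟨h₁, h₂, hne⟩ := hinner i hi0 hin
      rcases hH _ _ _ t h₁ h₂ hne ht with rfl | rfl
      exacts [⟨i - 1, by omega, rfl⟩, ⟨i + 1, hin, rfl⟩]
    · have hlast : W.getVert n = q := W.getVert_length
      have hpred := (hsucc (n - 1) (by omega)).symm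
      rw [Nat.sub_add_cancel hn, hlast] at hpred
      rw [hlast] at ht
      exact ⟨n - 1, by omega, hq hpred ht⟩
  obtain ⟨i, hi, rfl⟩ := hpr.mem_of_adj_closed hclosed ⟨0, Nat.zero_le _, W.getVert_zero⟩
  by_contra hend
  have hi0 : 0 < i := Nat.pos_of_ne_zero fun h => hend (Or.inl (by simp [h]))
  have hin : i < n := hi.lt_of_ne fun h => hend (Or.inr (by simp [h, n]))
  obtain ⟨h₁, h₂, hne⟩ := hinner i hi0 hin
  exact hne (hr h₁ h₂)

theorem exists_adj_iff_of_degree_eq_two [Fintype V] [DecidableRel H.Adj] {v u : V}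
    (hv : H.degree v = 2) (hu : H.Adj v u) : ∃ z, z ≠ u ∧ ∀ t, H.Adj v t ↔ t = u ∨ t = z := by
  classical
  obtain ⟨a, b, hab, hN⟩ := Finset.card_eq_two.1 ((H.card_neighborFinset_eq_degree v).trans hv)
  have hN' : H.neighborSet v = {a, b} := by rw [← H.coe_neighborFinset, hN, Finset.coe_pair]
  have hu' : u ∈ ({a, b} : Set V) := hN' ▸ hu
  rcases hu' with rfl | rfl
  · exact ⟨b, hab.symm, Set.ext_iff.1 hN'⟩
  · exact ⟨a, hab, Set.ext_iff.1 (hN'.trans (Set.pair_comm _ _))⟩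

end SimpleGraph

namespace Parsimonious

variable {V α : Type*} {G : SimpleGraph V}

def PresentAt (G : SimpleGraph V) (φ : Sym2 V → α) (w : V) (m : α) : Prop :=
  ∃ t, G.Adj w t ∧ φ s(w, t) = m

theorem card_le_degree_of_presentAt [Fintype V] [DecidableRel G.Adj] {φ : Sym2 V → α} {w : V}
    (S : Finset α) (hS : ∀ m ∈ S, PresentAt G φ w m) : S.card ≤ G.degree w := by
  classical
  calc S.card ≤ ((G.neighborFinset w).image fun t => φ s(w, t)).card :=
        Finset.card_le_card fun m hm => by
          obtain ⟨t, ht, rfl⟩ := hS m hm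
          exact Finset.mem_image_of_mem _ ((G.mem_neighborFinset w t).2 ht)
    _ ≤ (G.neighborFinset w).card := Finset.card_image_le
    _ = G.degree w := G.card_neighborFinset_eq_degree w

theorem ProperOn.eq_of_adj_of_colour_eq {φ : Sym2 V → α} (hφ : ProperOn G.edgeSet φ)
    {a t t' : V} (ht : G.Adj a t) (ht' : G.Adj a t') (h : φ s(a, t) = φ s(a, t')) : t = t' := by
  by_contra hne
  exact hφ ht ht' (fun h' => hne (Sym2.congr_right.mp h'))
    ⟨a, Sym2.mem_mk_left _ _, Sym2.mem_mk_left _ _⟩ h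

theorem ProperOn.update [DecidableEq (Sym2 V)] {F : Set (Sym2 V)} {φ : Sym2 V → α}
    (hφ : ProperOn F φ) {e : Sym2 V} {m : α}
    (hm : ∀ g ∈ F, g ≠ e → (∃ v, v ∈ e ∧ v ∈ g) → φ g ≠ m) :
    ProperOn F (Function.update φ e m) := by
  rintro g₁ hg₁ g₂ hg₂ hne ⟨v, hv₁, hv₂⟩
  by_cases h₁ : g₁ = e <;> by_cases h₂ : g₂ = e
  · exact absurd (h₁.trans h₂.symm) hne
  · subst h₁
    simpa [h₂] using (hm g₂ hg₂ h₂ ⟨v, hv₁, hv₂⟩).symm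
  · subst h₂
    simpa [h₁] using hm g₁ hg₁ h₁ ⟨v, hv₂, hv₁⟩
  · simpa [h₁, h₂] using hφ hg₁ hg₂ hne ⟨v, hv₁, hv₂⟩

theorem not_forall_presentAt [Fintype V] [DecidableRel G.Adj] (hdeg : G.maxDegree ≤ 3)
    (φ : Sym2 V → Fin 4) (w : V) :
    ¬ ∀ m, PresentAt G φ w m := fun h => by
  have h4 : 4 ≤ G.degree w := by simpa using card_le_degree_of_presentAt Finset.univ fun m _ => h m
  have := G.degree_le_maxDegree w
  omega

variable {φ : Sym2 V → Fin 4}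

theorem sColor_le (hφ : ProperOn G.edgeSet φ) : sColor G ≤ {e ∈ G.edgeSet | φ e = 3}.ncard :=
  Nat.sInf_le ⟨φ, hφ, rfl⟩

/-- Recolouring a δ-edge with a colour missing at both of its ends would save a δ-edge. -/
theorem IsDeltaMin.presentAt_or_presentAt [Finite V] (hφ : IsDeltaMin G φ) {u v : V}
    (huv : G.Adj u v) (hδ : φ s(u, v) = 3) {m : Fin 4} (hm : m ≠ 3) :
    PresentAt G φ u m ∨ PresentAt G φ v m := by
  classical
  by_contra! hmiss
  have hψ : ProperOn G.edgeSet (Function.update φ s(u, v) m) := by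
    refine hφ.1.update fun g hg hne ⟨x, hxe, hxg⟩ hgm => ?_
    obtain ⟨t, rfl⟩ := Sym2.mem_iff_exists.1 hxg
    rcases Sym2.mem_iff.1 hxe with rfl | rfl
    exacts [hmiss.1 ⟨t, hg, hgm⟩, hmiss.2 ⟨t, hg, hgm⟩]
  have hdiff : {e ∈ G.edgeSet | Function.update φ s(u, v) m e = 3} =
      {e ∈ G.edgeSet | φ e = 3} \ {s(u, v)} := by
    ext g
    by_cases hg : g = s(u, v) <;> simp [hg, hm]
  have hlt := Set.ncard_sdiff_singleton_lt_of_mem (s := {e ∈ G.edgeSet | φ e = 3})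
    ⟨huv, hδ⟩ (Set.toFinite _)
  rw [← hdiff, hφ.2] at hlt
  exact (sColor_le hψ).not_gt hlt

theorem twoColour_adj {m n : Fin 4} {a b : V} :
    (twoColour G φ m n).Adj a b ↔ G.Adj a b ∧ (φ s(a, b) = m ∨ φ s(a, b) = n) := by
  simp only [twoColour, fromEdgeSet_adj, Set.mem_ofPred_eq, mem_edgeSet]
  exact ⟨fun h => h.1, fun h => ⟨h, h.1.ne⟩⟩

theorem ProperOn.twoColour_eq_or_eq (hφ : ProperOn G.edgeSet φ) (m n : Fin 4) :
    ∀ v a b t, (twoColour G φ m n).Adj v a → (twoColour G φ m n).Adj v b → a ≠ b →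
      (twoColour G φ m n).Adj v t → t = a ∨ t = b := by
  intro v a b t ha hb hab ht
  rw [twoColour_adj] at ha hb ht
  have hne : φ s(v, a) ≠ φ s(v, b) := fun h => hab (hφ.eq_of_adj_of_colour_eq ha.1 hb.1 h)
  by_cases hta : φ s(v, t) = φ s(v, a)
  · exact Or.inl (hφ.eq_of_adj_of_colour_eq ht.1 ha.1 hta)
  · refine Or.inr (hφ.eq_of_adj_of_colour_eq ht.1 hb.1 ?_)
    rcases ha.2 with h₁ | h₁ <;> rcases hb.2 with h₂ | h₂ <;> rcases ht.2 with h₃ | h₃ <;>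
      simp_all

theorem ProperOn.twoColour_neighborSet_subsingleton (hφ : ProperOn G.edgeSet φ) {m n : Fin 4}
    {w : V} (hw : ¬ PresentAt G φ w m ∨ ¬ PresentAt G φ w n) :
    ((twoColour G φ m n).neighborSet w).Subsingleton := by
  intro a ha b hb
  rw [mem_neighborSet, twoColour_adj] at ha hb
  refine hφ.eq_of_adj_of_colour_eq ha.1 hb.1 ?_
  rcases hw with hw | hw
  · rw [ha.2.resolve_left fun h => hw ⟨a, ha.1, h⟩, hb.2.resolve_left fun h => hw ⟨b, hb.1, h⟩]
  · rw [ha.2.resolve_right fun h => hw ⟨a, ha.1, h⟩,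
      hb.2.resolve_right fun h => hw ⟨b, hb.1, h⟩]

theorem ProperOn.eq_or_eq_of_reachable_twoColour (hφ : ProperOn G.edgeSet φ) {m n : Fin 4}
    {p q r : V} (hp : ¬ PresentAt G φ p m ∨ ¬ PresentAt G φ p n)
    (hq : ¬ PresentAt G φ q m ∨ ¬ PresentAt G φ q n)
    (hr : ¬ PresentAt G φ r m ∨ ¬ PresentAt G φ r n) (hpq : (twoColour G φ m n).Reachable p q)
    (hne : p ≠ q) (hpr : (twoColour G φ m n).Reachable p r) : r = p ∨ r = q :=
  eq_or_eq_of_reachable_of_subsingleton_neighborSet (hφ.twoColour_eq_or_eq m n)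
    (hφ.twoColour_neighborSet_subsingleton hp) (hφ.twoColour_neighborSet_subsingleton hq)
    (hφ.twoColour_neighborSet_subsingleton hr) hpq hne hpr

/-- Interchange the colours `x` and `y` on the edges meeting the component of `a` in `φ(x, y)`
(a Kempe chain); edges of other colours are fixed by the transposition. -/
noncomputable def kempeSwap (G : SimpleGraph V) (φ : Sym2 V → Fin 4) (x y : Fin 4) (a : V)
    (e : Sym2 V) : Fin 4 :=
  open Classical in
  if ∃ w ∈ e, (twoColour G φ x y).Reachable a w then Equiv.swap x y (φ e) else φ e

variable {x y : Fin 4} {a : V}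

theorem kempeSwap_of_reachable {e : Sym2 V} {w : V} (hw : w ∈ e)
    (h : (twoColour G φ x y).Reachable a w) :
    kempeSwap G φ x y a e = Equiv.swap x y (φ e) := by
  rw [kempeSwap, if_pos ⟨w, hw, h⟩]

theorem kempeSwap_of_not_reachable {e : Sym2 V} {w : V} (he : e ∈ G.edgeSet) (hw : w ∈ e)
    (h : ¬ (twoColour G φ x y).Reachable a w) : kempeSwap G φ x y a e = φ e := by
  rw [kempeSwap]
  split_ifs with hR
  · obtain ⟨t, ht, hat⟩ := hR
    by_cases hc : φ e = x ∨ φ e = y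
    · refine absurd ?_ h
      rcases eq_or_ne t w with rfl | htw
      · exact hat
      obtain rfl := Sym2.mem_and_mem_iff htw |>.1 ⟨ht, hw⟩
      exact hat.trans (twoColour_adj.2 ⟨he, hc⟩).reachable
    · push Not at hc
      exact Equiv.swap_apply_of_ne_of_ne hc.1 hc.2
  · rfl

theorem kempeSwap_mk_self {b : V} (h : φ s(a, b) = y) : kempeSwap G φ x y a s(a, b) = x := by
  rw [kempeSwap_of_reachable (Sym2.mem_mk_left _ _) (Reachable.refl _), h, Equiv.swap_apply_right]

theorem ProperOn.kempeSwap (hφ : ProperOn G.edgeSet φ) :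
    ProperOn G.edgeSet (kempeSwap G φ x y a) := by
  rintro g₁ hg₁ g₂ hg₂ hne ⟨v, hv₁, hv₂⟩
  by_cases hv : (twoColour G φ x y).Reachable a v
  · rw [kempeSwap_of_reachable hv₁ hv, kempeSwap_of_reachable hv₂ hv]
    exact (Equiv.swap x y).injective.ne (hφ hg₁ hg₂ hne ⟨v, hv₁, hv₂⟩)
  · rw [kempeSwap_of_not_reachable hg₁ hv₁ hv, kempeSwap_of_not_reachable hg₂ hv₂ hv]
    exact hφ hg₁ hg₂ hne ⟨v, hv₁, hv₂⟩

theorem kempeSwap_eq_three_iff (hx : x ≠ 3) (hy : y ≠ 3) {e : Sym2 V} :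
    kempeSwap G φ x y a e = 3 ↔ φ e = 3 := by
  rw [kempeSwap]
  split_ifs
  · rw [Equiv.swap_apply_eq_iff, Equiv.swap_apply_of_ne_of_ne hx.symm hy.symm]
  · rfl

theorem IsDeltaMin.kempeSwap (hφ : IsDeltaMin G φ) (hx : x ≠ 3) (hy : y ≠ 3) :
    IsDeltaMin G (kempeSwap G φ x y a) :=
  ⟨hφ.1.kempeSwap, by simpa only [kempeSwap_eq_three_iff hx hy] using hφ.2⟩

theorem presentAt_kempeSwap_iff {w : V} (h : ¬ (twoColour G φ x y).Reachable a w) {m : Fin 4} :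
    PresentAt G (kempeSwap G φ x y a) w m ↔ PresentAt G φ w m :=
  exists_congr fun _ => and_congr_right fun ht => by
    rw [kempeSwap_of_not_reachable ((mem_edgeSet G).2 ht) (Sym2.mem_mk_left _ _) h]

variable {u v₁ z₁ : V}

theorem colour_pendant_ne_three (hφ : ProperOn G.edgeSet φ) (hδ : φ s(u, v₁) = 3)
    (hN : ∀ t, G.Adj v₁ t ↔ t = u ∨ t = z₁) (hzu : z₁ ≠ u) : φ s(v₁, z₁) ≠ 3 := fun h => by
  have hu : G.Adj v₁ u := (hN u).2 (.inl rfl)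
  have hz : G.Adj v₁ z₁ := (hN z₁).2 (.inr rfl)
  exact hzu (hφ.eq_of_adj_of_colour_eq hz hu (by rw [h, Sym2.eq_swap, hδ]))

theorem not_presentAt_of_pendant (hδ : φ s(u, v₁) = 3) (hN : ∀ t, G.Adj v₁ t ↔ t = u ∨ t = z₁)
    {m : Fin 4} (hm3 : m ≠ 3) (hmc : m ≠ φ s(v₁, z₁)) : ¬ PresentAt G φ v₁ m := by
  rintro ⟨t, ht, rfl⟩
  rcases (hN t).1 ht with rfl | rfl
  · exact hm3 (by rw [Sym2.eq_swap, hδ])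
  · exact hmc rfl

theorem presentAt_of_pendant [Finite V] (hφ : IsDeltaMin G φ) (hδ : φ s(u, v₁) = 3)
    (hN : ∀ t, G.Adj v₁ t ↔ t = u ∨ t = z₁) {m : Fin 4} (hm3 : m ≠ 3) (hmc : m ≠ φ s(v₁, z₁)) :
    PresentAt G φ u m :=
  (hφ.presentAt_or_presentAt ((hN u).2 (.inl rfl)).symm hδ hm3).resolve_right
    (not_presentAt_of_pendant hδ hN hm3 hmc)

section Finite

variable [Fintype V] [DecidableRel G.Adj]

/-- The end `u` already sees `δ` and the two colours missing at `v₁`, so it has no room left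
for the colour of `v₁ z₁`. -/
theorem not_presentAt_pendant_colour (hdeg : G.maxDegree ≤ 3) (hφ : IsDeltaMin G φ)
    (hδ : φ s(u, v₁) = 3) (hN : ∀ t, G.Adj v₁ t ↔ t = u ∨ t = z₁) :
    ¬ PresentAt G φ u (φ s(v₁, z₁)) := fun hc => by
  refine not_forall_presentAt hdeg φ u fun m => ?_
  by_cases hm3 : m = 3
  · exact ⟨v₁, ((hN u).2 (.inl rfl)).symm, hm3 ▸ hδ⟩
  by_cases hmc : m = φ s(v₁, z₁)
  · exact hmc ▸ hc
  · exact presentAt_of_pendant hφ hδ hN hm3 hmc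

/-- With `c = φ(v₁ z₁)`: if `u` were off the chain of `φ(m, c)` at `v₁`, swapping that chain
would leave `c` missing at both ends of `u v₁`. -/
theorem reachable_of_pendant (hdeg : G.maxDegree ≤ 3) (hφ : IsDeltaMin G φ)
    (hδ : φ s(u, v₁) = 3) (hN : ∀ t, G.Adj v₁ t ↔ t = u ∨ t = z₁) (hzu : z₁ ≠ u) {m : Fin 4}
    (hm3 : m ≠ 3) (hmc : m ≠ φ s(v₁, z₁)) : (twoColour G φ m (φ s(v₁, z₁))).Reachable v₁ u := by
  by_contra hnr
  have hc3 := colour_pendant_ne_three hφ.1 hδ hN hzu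
  have hψ := hφ.kempeSwap (a := v₁) hm3 hc3
  have hψδ : kempeSwap G φ m (φ s(v₁, z₁)) v₁ s(u, v₁) = 3 := (kempeSwap_eq_three_iff hm3 hc3).2 hδ
  have hψz : kempeSwap G φ m (φ s(v₁, z₁)) v₁ s(v₁, z₁) = m := kempeSwap_mk_self rfl
  rcases hψ.presentAt_or_presentAt ((hN u).2 (.inl rfl)).symm hψδ hc3 with hu | hv
  · exact not_presentAt_pendant_colour hdeg hφ hδ hN ((presentAt_kempeSwap_iff hnr).1 hu)
  · exact not_presentAt_of_pendant hψδ hN hc3 (by rw [hψz]; exact Ne.symm hmc) hv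

/-- Otherwise, with `x = φ(u w)`, the vertices `v₁`, `u`, `w` would be three ends of one
component of `φ(x, φ(v₁ z₁))`. -/
theorem presentAt_pendant_colour_of_adj (hdeg : G.maxDegree ≤ 3) (hφ : IsDeltaMin G φ)
    (hδ : φ s(u, v₁) = 3) (hN : ∀ t, G.Adj v₁ t ↔ t = u ∨ t = z₁) (hzu : z₁ ≠ u) {w : V}
    (huw : G.Adj u w) (hwv : w ≠ v₁) : PresentAt G φ w (φ s(v₁, z₁)) := by
  by_contra hwc
  have huv : G.Adj u v₁ := ((hN u).2 (.inl rfl)).symm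
  have hu := not_presentAt_pendant_colour hdeg hφ hδ hN
  have hx3 : φ s(u, w) ≠ 3 := fun h => hwv (hφ.1.eq_of_adj_of_colour_eq huw huv (h.trans hδ.symm))
  have hreach := reachable_of_pendant hdeg hφ hδ hN hzu hx3 fun h => hu ⟨w, huw, h⟩
  rcases hφ.1.eq_or_eq_of_reachable_twoColour
      (.inl (not_presentAt_of_pendant hδ hN hx3 fun h => hu ⟨w, huw, h⟩)) (.inr hu) (.inr hwc)
      hreach huv.ne.symm (hreach.trans (twoColour_adj.2 ⟨huw, .inl rfl⟩).reachable) with h | h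
  exacts [hwv h, huw.ne h.symm]

/-- For `m` other than `δ` and `c = φ(v₁ z₁)`: if `w` misses `m`, then `v₁`, `u`, `w` are three
ends in `φ(m, c)`, so `w` lies off the chain of `v₁`; swapping that chain makes `m` the colour
of `v₁ z₁` without touching `w`, against the previous lemma. -/
theorem presentAt_of_adj (hdeg : G.maxDegree ≤ 3) (hφ : IsDeltaMin G φ)
    (hδ : φ s(u, v₁) = 3) (hN : ∀ t, G.Adj v₁ t ↔ t = u ∨ t = z₁) (hzu : z₁ ≠ u) {w : V}
    (huw : G.Adj u w) (hwv : w ≠ v₁) {m : Fin 4} (hm3 : m ≠ 3) : PresentAt G φ w m := by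
  by_cases hmc : m = φ s(v₁, z₁)
  · exact hmc ▸ presentAt_pendant_colour_of_adj hdeg hφ hδ hN hzu huw hwv
  by_contra hwm
  have hc3 := colour_pendant_ne_three hφ.1 hδ hN hzu
  have hreach := reachable_of_pendant hdeg hφ hδ hN hzu hm3 hmc
  by_cases hreach_w : (twoColour G φ m (φ s(v₁, z₁))).Reachable v₁ w
  · rcases hφ.1.eq_or_eq_of_reachable_twoColour (.inl (not_presentAt_of_pendant hδ hN hm3 hmc))
        (.inr (not_presentAt_pendant_colour hdeg hφ hδ hN)) (.inl hwm) hreach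
        ((hN u).2 (.inl rfl)).ne hreach_w with h | h
    exacts [hwv h, huw.ne h.symm]
  · have hψδ : kempeSwap G φ m (φ s(v₁, z₁)) v₁ s(u, v₁) = 3 :=
      (kempeSwap_eq_three_iff hm3 hc3).2 hδ
    have hψz : kempeSwap G φ m (φ s(v₁, z₁)) v₁ s(v₁, z₁) = m := kempeSwap_mk_self rfl
    have := presentAt_pendant_colour_of_adj hdeg (hφ.kempeSwap hm3 hc3) hψδ hN hzu huw hwv
    rw [hψz, presentAt_kempeSwap_iff hreach_w] at this
    exact hwm this

/-- Otherwise `v₁`, `z₁`, `u` would be three ends of one component of `φ(m, φ(v₁ z₁))`. -/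
theorem presentAt_of_adj_pendant (hdeg : G.maxDegree ≤ 3) (hφ : IsDeltaMin G φ)
    (hδ : φ s(u, v₁) = 3) (hN : ∀ t, G.Adj v₁ t ↔ t = u ∨ t = z₁) (hzu : z₁ ≠ u) {m : Fin 4}
    (hm3 : m ≠ 3) : PresentAt G φ z₁ m := by
  have hz : G.Adj v₁ z₁ := (hN z₁).2 (.inr rfl)
  by_cases hmc : m = φ s(v₁, z₁)
  · exact ⟨v₁, hz.symm, by rw [Sym2.eq_swap, hmc]⟩
  by_contra hzm
  rcases hφ.1.eq_or_eq_of_reachable_twoColour (.inl (not_presentAt_of_pendant hδ hN hm3 hmc))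
      (.inl hzm) (.inr (not_presentAt_pendant_colour hdeg hφ hδ hN))
      (twoColour_adj.2 ⟨hz, .inr rfl⟩).reachable hz.ne
      (reachable_of_pendant hdeg hφ hδ hN hzu hm3 hmc) with h | h
  exacts [((hN u).2 (.inl rfl)).ne h.symm, hzu h.symm]

end Finite

end Parsimonious

open Parsimonious in
theorem deltaMin_degree_two_end_general {V : Type*} [Fintype V] (G : SimpleGraph V)
    [DecidableRel G.Adj] (hdeg : G.maxDegree ≤ 3)
    (φ : Sym2 V → Fin 4) (hφ : IsDeltaMin G φ)
    (u v₁ : V) (he₁ : G.Adj u v₁) (hδ₁ : φ s(u, v₁) = 3) (hdv₁ : G.degree v₁ = 2) :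
    (∀ w ∈ G.neighborSet u, G.degree w = 2 → w = v₁) ∧
    (∀ u₂ v₂ : V, G.Adj u₂ v₂ → φ s(u₂, v₂) = 3 → s(u₂, v₂) ≠ s(u, v₁) →
      ∀ x ∈ (s(u, v₁) : Sym2 V), ∀ y ∈ (s(u₂, v₂) : Sym2 V), x ≠ y ∧ ¬ G.Adj x y) := by
  obtain ⟨z₁, hzu, hN⟩ := G.exists_adj_iff_of_degree_eq_two hdv₁ he₁.symm
  refine ⟨fun w hw hdw => ?_, fun u₂ v₂ h₂ hδ₂ hne x hx y hy => ?_⟩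
  · by_contra hwv
    have := card_le_degree_of_presentAt (Finset.univ.erase 3) fun m hm =>
      presentAt_of_adj hdeg hφ hδ₁ hN hzu hw hwv (Finset.ne_of_mem_erase hm)
    simp [hdw] at this
  have hdisj : ∀ x ∈ s(u, v₁), x ≠ y := by
    rintro x hx rfl
    exact hφ.1 h₂ he₁ hne ⟨x, hy, hx⟩ (hδ₂.trans hδ₁.symm)
  refine ⟨hdisj x hx, fun hxy => not_forall_presentAt hdeg φ y fun m => ?_⟩
  obtain ⟨y', hy'⟩ := Sym2.mem_iff_exists.1 hy
  by_cases hm3 : m = 3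
  · exact ⟨y', by rw [← mem_edgeSet, ← hy']; exact h₂, by rw [← hy', hδ₂, hm3]⟩
  rcases Sym2.mem_iff.1 hx with rfl | rfl
  · exact presentAt_of_adj hdeg hφ hδ₁ hN hzu hxy (hdisj v₁ (Sym2.mem_mk_right _ _)).symm hm3
  · rcases (hN y).1 hxy with rfl | rfl
    · exact absurd rfl (hdisj y (Sym2.mem_mk_left _ _))
    · exact presentAt_of_adj_pendant hdeg hφ hδ₁ hN hzu hm3

open Parsimonious in
/-- If `e₁ = u v₁` is coloured `δ` by a δ-minimum edge colouring and
`v₁` has degree 2, then `v₁` is the only vertex of degree 2 in `N(u)`, and for any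
other δ-coloured edge `e₂ = u₂ v₂` the set `{e₁, e₂}` induces a `2K₂`. -/
theorem deltaMin_degree_two_end {V : Type*} [Fintype V] (G : SimpleGraph V)
    [DecidableRel G.Adj] (hconn : G.Connected) (hdeg : G.maxDegree ≤ 3)
    (φ : Sym2 V → Fin 4) (hφ : IsDeltaMin G φ)
    (u v₁ : V) (he₁ : G.Adj u v₁) (hδ₁ : φ s(u, v₁) = 3) (hdv₁ : G.degree v₁ = 2) :
    (∀ w ∈ G.neighborSet u, G.degree w = 2 → w = v₁) ∧
    (∀ u₂ v₂ : V, G.Adj u₂ v₂ → φ s(u₂, v₂) = 3 → s(u₂, v₂) ≠ s(u, v₁) →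
      ∀ x ∈ (s(u, v₁) : Sym2 V), ∀ y ∈ (s(u₂, v₂) : Sym2 V), x ≠ y ∧ ¬ G.Adj x y) :=
  deltaMin_degree_two_end_general G hdeg φ hφ u v₁ he₁ hδ₁ hdv₁
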